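/- arXiv:2201.10230 — 4 statements merged into one kernel-verified Lean document; each statement's English description precedes it below -/
import Mathlib

section
/- For every polyanalytic function f: ℂ → ℂ of order at most n (i.e. ∂ⁿf/(∂z̄)ⁿ = 0), there exist entire functions h₀, …, h_{n-1} such that f(z) = ∑_{j=0}^{n-1} h_j(z) · z̄^j for all z ∈ ℂ. -/
open Complex

/-- Wirtinger derivative ∂/∂z̄ = (1/2)(∂/∂x + i ∂/∂y). -/
noncomputable def wdzbar (f : ℂ → ℂ) (z : ℂ) : ℂ :=
  (1/2 : ℂ) * (fderiv ℝ f z 1 + Complex.I * fderiv ℝ f z Complex.I)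

lemma wdzbar_eq {f : ℂ → ℂ} {L : ℂ →L[ℝ] ℂ} {z : ℂ} (h : HasFDerivAt f L z) :
    wdzbar f z = (1/2 : ℂ) * (L 1 + Complex.I * L Complex.I) := by
  rw [wdzbar, h.fderiv]

noncomputable def conjCLM : ℂ →L[ℝ] ℂ := Complex.conjCLE.toContinuousLinearMap

lemma hasFDerivAt_conj (z : ℂ) : HasFDerivAt (fun w => (starRingEnd ℂ) w) conjCLM z := by
  have := Complex.conjCLE.hasFDerivAt (x := z)
  exact this

lemma entire_contDiff {g : ℂ → ℂ} (hg : Differentiable ℂ g) : ContDiff ℝ (⊤ : ℕ∞) g := by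
  have h1 : AnalyticOn ℂ g Set.univ := fun x _ => (hg.analyticAt x).analyticWithinAt
  exact h1.contDiff.restrict_scalars ℝ

lemma contDiff_wdzbar {f : ℂ → ℂ} (hf : ContDiff ℝ (⊤ : ℕ∞) f) : ContDiff ℝ (⊤ : ℕ∞) (wdzbar f) := by
  have h1 : ContDiff ℝ (⊤ : ℕ∞) (fderiv ℝ f) := hf.fderiv_right (by simp)
  exact contDiff_const.mul ((h1.clm_apply contDiff_const).add
    (contDiff_const.mul (h1.clm_apply contDiff_const)))

lemma differentiable_of_wdzbar_zero {f : ℂ → ℂ} (hf : Differentiable ℝ f)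
    (h : ∀ z, wdzbar f z = 0) : Differentiable ℂ f := by
  intro z
  set L := fderiv ℝ f z with hLdef
  have hL : HasFDerivAt f L z := (hf z).hasFDerivAt
  have h0 : L 1 + Complex.I * L Complex.I = 0 := by
    have := h z
    rw [wdzbar] at this
    linear_combination 2 * this
  have hI : L Complex.I = Complex.I * L 1 := by
    linear_combination (-Complex.I) * h0 + (L Complex.I) * Complex.I_sq
  have key : HasFDerivAt f ((1 : ℂ →L[ℂ] ℂ).smulRight (L 1)) z := by
    apply hasFDerivAt_of_restrictScalars (𝕜 := ℝ) hL
    ext w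
    have hw : L w = w.re • L 1 + w.im • L Complex.I := by
      conv_lhs => rw [show w = w.re • (1:ℂ) + w.im • Complex.I by
        simp [Complex.real_smul, Complex.re_add_im]]
      rw [map_add, map_smul, map_smul]
    simp only [ContinuousLinearMap.coe_restrictScalars', ContinuousLinearMap.smulRight_apply,
      ContinuousLinearMap.one_apply, smul_eq_mul]
    rw [hw, hI]
    simp only [Complex.real_smul]
    rw [show ((w.re : ℂ) * L 1 + (w.im : ℂ) * (Complex.I * L 1)) = ((w.re:ℂ) + w.im * Complex.I) * L 1 by ring,
      Complex.re_add_im]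
  exact key.differentiableAt

lemma wdzbar_term {g : ℂ → ℂ} (hg : Differentiable ℂ g) (m : ℕ) (z : ℂ) :
    wdzbar (fun w => g w * (starRingEnd ℂ w) ^ m) z
      = (m : ℂ) * g z * (starRingEnd ℂ z) ^ (m - 1) := by
  have h1 : HasFDerivAt g (((1 : ℂ →L[ℂ] ℂ).smulRight (deriv g z)).restrictScalars ℝ) z :=
    ((hg z).hasDerivAt.hasFDerivAt).restrictScalars ℝ
  have hpow : HasFDerivAt (fun w : ℂ => w ^ m)
      (((1 : ℂ →L[ℂ] ℂ).smulRight ((m:ℂ) * z ^ (m-1))).restrictScalars ℝ) z :=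
    ((hasDerivAt_pow m z).hasFDerivAt).restrictScalars ℝ
  have h2 : HasFDerivAt (fun w : ℂ => (starRingEnd ℂ) (w ^ m))
      (conjCLM.comp (((1 : ℂ →L[ℂ] ℂ).smulRight ((m:ℂ) * z ^ (m-1))).restrictScalars ℝ)) z :=
    (hasFDerivAt_conj _).comp z hpow
  have hmul := h1.fun_mul h2
  have heq : (fun w => g w * (starRingEnd ℂ w) ^ m) = (fun w => g w * (starRingEnd ℂ) (w ^ m)) := by
    funext w; rw [map_pow]
  rw [heq, wdzbar_eq hmul]
  simp only [ContinuousLinearMap.add_apply, ContinuousLinearMap.smul_apply,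
    ContinuousLinearMap.coe_comp', Function.comp_apply, ContinuousLinearMap.coe_restrictScalars',
    ContinuousLinearMap.smulRight_apply, ContinuousLinearMap.one_apply, conjCLM,
    ContinuousLinearEquiv.coe_coe, Complex.conjCLE_apply, map_mul, Complex.conj_I,
    map_natCast, map_pow, smul_eq_mul, map_one]
  ring_nf
  rw [Complex.I_sq]
  ring

lemma wdzbar_sub {f g : ℂ → ℂ} {z : ℂ} (hf : DifferentiableAt ℝ f z)
    (hg : DifferentiableAt ℝ g z) :
    wdzbar (fun w => f w - g w) z = wdzbar f z - wdzbar g z := by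
  rw [wdzbar_eq (hf.hasFDerivAt.fun_sub hg.hasFDerivAt), wdzbar, wdzbar]
  simp only [ContinuousLinearMap.sub_apply]
  ring

lemma wdzbar_sum {ι : Type*} (s : Finset ι) (u : ι → ℂ → ℂ) (z : ℂ)
    (hu : ∀ i ∈ s, DifferentiableAt ℝ (u i) z) :
    wdzbar (fun w => ∑ i ∈ s, u i w) z = ∑ i ∈ s, wdzbar (u i) z := by
  have h : HasFDerivAt (fun w => ∑ i ∈ s, u i w) (∑ i ∈ s, fderiv ℝ (u i) z) z :=
    HasFDerivAt.fun_sum (fun i hi => (hu i hi).hasFDerivAt)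
  rw [wdzbar_eq h]
  simp only [ContinuousLinearMap.sum_apply, wdzbar, Finset.mul_sum, Finset.sum_add_distrib]
  rw [← Finset.sum_add_distrib, ← Finset.mul_sum]

theorem polyanalytic_representation (n : ℕ) (f : ℂ → ℂ)
    (hf : ContDiff ℝ (⊤ : ℕ∞) f)
    (hpoly : ∀ z, (wdzbar^[n] f) z = 0) :
    ∃ h : Fin n → ℂ → ℂ, (∀ j, Differentiable ℂ (h j)) ∧
      ∀ z, f z = ∑ j : Fin n, h j z * (starRingEnd ℂ z) ^ (j : ℕ) := by
  induction n generalizing f with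
  | zero =>
    exact ⟨fun j => 0, fun j => j.elim0, fun z => by simpa using hpoly z⟩
  | succ n ih =>
    have hg : ContDiff ℝ (⊤ : ℕ∞) (wdzbar f) := contDiff_wdzbar hf
    have hp : ∀ z, (wdzbar^[n] (wdzbar f)) z = 0 := fun z => by
      rw [← Function.iterate_succ_apply]; exact hpoly z
    obtain ⟨g, hgdiff, hgeq⟩ := ih (wdzbar f) hg hp
    set h1 : Fin n → ℂ → ℂ := fun j z => (((j : ℕ) : ℂ) + 1)⁻¹ * g j z with hh1
    have hh1diff : ∀ j, Differentiable ℂ (h1 j) := fun j => (hgdiff j).const_mul _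
    set T : Fin n → ℂ → ℂ := fun j z => h1 j z * (starRingEnd ℂ z) ^ ((j : ℕ) + 1) with hT
    have hTsm : ∀ j, ContDiff ℝ (⊤ : ℕ∞) (T j) := by
      intro j
      exact (entire_contDiff (hh1diff j)).mul
        ((Complex.conjCLE.toContinuousLinearMap.contDiff).pow _)
    set F : ℂ → ℂ := fun z => f z - ∑ j : Fin n, T j z with hF
    have hTd : ∀ z, ∀ j ∈ Finset.univ (α := Fin n), DifferentiableAt ℝ (T j) z :=
      fun z j _ => ((hTsm j).differentiable (by simp)).differentiableAt
    have hSd : ∀ z, DifferentiableAt ℝ (fun w => ∑ j : Fin n, T j w) z := by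
      intro z
      exact DifferentiableAt.fun_sum (fun j hj => hTd z j hj)
    have hwF : ∀ z, wdzbar F z = 0 := by
      intro z
      rw [hF]
      rw [wdzbar_sub ((hf.differentiable (by simp)).differentiableAt) (hSd z)]
      rw [wdzbar_sum _ _ _ (hTd z), hgeq z]
      rw [sub_eq_zero]
      apply Finset.sum_congr rfl
      intro j _
      have := wdzbar_term (hh1diff j) ((j : ℕ) + 1) z
      rw [hT]
      simp only at this ⊢
      rw [this]
      have hne : (((j : ℕ) : ℂ) + 1) ≠ 0 := by
        simpa using Nat.cast_add_one_ne_zero (R := ℂ) (j : ℕ)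
      rw [hh1]
      simp only
      push_cast
      field_simp
    have hFd : Differentiable ℂ F := by
      apply differentiable_of_wdzbar_zero _ hwF
      exact ((hf.differentiable (by simp)).sub fun z => hSd z)
    refine ⟨Fin.cons F h1, ?_, ?_⟩
    · intro j
      refine Fin.cases ?_ ?_ j
      · exact hFd
      · intro i; simpa using hh1diff i
    · intro z
      rw [Fin.sum_univ_succ]
      simp only [Fin.cons_zero, Fin.cons_succ, Fin.val_zero, pow_zero, mul_one, Fin.val_succ]
      rw [hF]
      simp only
      rw [hT]
      simp only
      ring
end

section
/- A polyanalytic function on ℂ that vanishes on a nonempty open subset of ℂ is identically zero. -/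
open Complex ComplexConjugate Filter Topology

/-! On a vertical line `re w = a` we have `conj w = 2a - w`, so there `f` agrees with the entire
function `w ↦ ∑ h j w * (2a - w) ^ j`. When the line meets `U`, this function vanishes on a
segment and hence everywhere. So for fixed `z` the polynomial `v ↦ ∑ h j z * v ^ j` vanishes at
`2a - z` for all `a` in an interval, hence identically, and evaluating at `v = conj z` gives
`f z = 0`. -/

theorem Differentiable.eq_zero_of_eventually_eq_zero_along_line {g : ℂ → ℂ}
    (hg : Differentiable ℂ g) {p v : ℂ} (hv : v ≠ 0)
    (h : ∀ᶠ t : ℝ in 𝓝 0, g (p + t * v) = 0) : g = 0 := by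
  have hline : Tendsto (fun t : ℝ => p + t * v) (𝓝[≠] 0) (𝓝[≠] p) := by
    refine tendsto_nhdsWithin_of_tendsto_nhds_of_eventually_within _ ?_ ?_
    · exact (Continuous.tendsto' (by fun_prop) 0 p (by simp)).mono_left nhdsWithin_le_nhds
    · filter_upwards [self_mem_nhdsWithin] with t ht
      simpa [hv] using ht
  have hfreq : ∃ᶠ z in 𝓝[≠] p, g z = 0 :=
    hline.frequently (h.filter_mono nhdsWithin_le_nhds).frequently
  funext z
  exact AnalyticOnNhd.eqOn_zero_of_preconnected_of_frequently_eq_zero (fun w _ => hg.analyticAt w)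
    isPreconnected_univ (Set.mem_univ p) hfreq (Set.mem_univ z)

theorem eventually_add_ofReal_mul_mem {U : Set ℂ} {p : ℂ} (hU : U ∈ 𝓝 p) (v : ℂ) :
    ∀ᶠ t : ℝ in 𝓝 0, p + t * v ∈ U :=
  (Continuous.tendsto' (by fun_prop) 0 p (by simp)).eventually hU

theorem conj_eq_two_mul_re_sub (w : ℂ) : conj w = 2 * w.re - w := by
  rw [eq_sub_iff_add_eq', add_conj]; push_cast; ring

theorem sum_mul_two_mul_re_sub_pow_eq_zero {n : ℕ} {h : Fin n → ℂ → ℂ}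
    (hh : ∀ j, Differentiable ℂ (h j)) {U : Set ℂ}
    (hvanish : ∀ z ∈ U, ∑ j : Fin n, h j z * conj z ^ (j : ℕ) = 0) {p : ℂ} (hp : U ∈ 𝓝 p) :
    (fun w => ∑ j : Fin n, h j w * (2 * p.re - w) ^ (j : ℕ)) = 0 := by
  refine Differentiable.eq_zero_of_eventually_eq_zero_along_line (p := p) (v := I)
    (by fun_prop) I_ne_zero ?_
  filter_upwards [eventually_add_ofReal_mul_mem hp I] with t ht
  have hre : (p + t * I).re = p.re := by simp
  rw [← hvanish _ ht, conj_eq_two_mul_re_sub, hre]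

/-- A polyanalytic function on ℂ that vanishes on a nonempty open set is identically zero. -/
theorem polyanalytic_identity_theorem (n : ℕ) (h : Fin n → ℂ → ℂ)
    (hh : ∀ j, Differentiable ℂ (h j)) (f : ℂ → ℂ)
    (hf : ∀ z, f z = ∑ j : Fin n, h j z * (starRingEnd ℂ z) ^ (j : ℕ))
    (U : Set ℂ) (hU : IsOpen U) (hUne : U.Nonempty)
    (hvanish : ∀ z ∈ U, f z = 0) :
    ∀ z, f z = 0 := by
  obtain ⟨z₀, hz₀⟩ := hUne
  have hreflect : ∀ p ∈ U, ∀ w, ∑ j : Fin n, h j w * (2 * p.re - w) ^ (j : ℕ) = 0 :=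
    fun p hp => congr_fun <| sum_mul_two_mul_re_sub_pow_eq_zero hh
      (fun z hz => hf z ▸ hvanish z hz) (hU.mem_nhds hp)
  intro z
  have hpoly : (fun v => ∑ j : Fin n, h j z * v ^ (j : ℕ)) = 0 := by
    refine Differentiable.eq_zero_of_eventually_eq_zero_along_line
      (p := 2 * z₀.re - z) (v := 2) (by fun_prop) two_ne_zero ?_
    filter_upwards [eventually_add_ofReal_mul_mem (hU.mem_nhds hz₀) 1] with t ht
    convert hreflect _ ht z using 4
    simp only [mul_one, add_re, ofReal_re, ofReal_add]; ring
  rw [hf z]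
  exact congr_fun hpoly (conj z)
end

section
/- Let f: ℂ → ℂ be bounded and uniformly continuous with vanishing oscillation, meaning Osc_z(f) = sup{|f(z)−f(w)| : |z−w| ≤ 1} → 0 as |z| → ∞. Then for any sequence (z_m) in ℂ with |z_m| → ∞ such that f(z_m) → λ, the translates f(· + z_m) converge to the constant λ uniformly on compact subsets of ℂ. -/
open Filter Metric

/-- The oscillation of f at z over the closed unit ball. -/
noncomputable def osc (f : ℂ → ℂ) (z : ℂ) : ℝ :=
  sSup ((fun w => ‖f z - f w‖) '' closedBall z 1)

lemma osc_le_bound (f : ℂ → ℂ) (C : ℝ) (hC : ∀ z, ‖f z‖ ≤ C) {ζ w : ℂ}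
    (hw : w ∈ closedBall ζ 1) : ‖f ζ - f w‖ ≤ osc f ζ := by
  apply le_csSup
  · refine ⟨2 * C, ?_⟩
    rintro x ⟨v, _, rfl⟩
    calc ‖f ζ - f v‖ ≤ ‖f ζ‖ + ‖f v‖ := norm_sub_le _ _
      _ ≤ C + C := add_le_add (hC ζ) (hC v)
      _ = 2 * C := by ring
  · exact ⟨w, hw, rfl⟩

/-- If f is bounded, uniformly continuous and has vanishing oscillation, then along any
sequence z_m → ∞ with f(z_m) → λ, the translates f(· + z_m) converge to the constant λ
uniformly on compact sets. -/
theorem vanishing_oscillation_translates (f : ℂ → ℂ)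
    (hbd : ∃ C, ∀ z, ‖f z‖ ≤ C) (huc : UniformContinuous f)
    (hvo : Tendsto (fun z => osc f z) (cocompact ℂ) (nhds 0))
    (z : ℕ → ℂ) (hz : Tendsto (fun m => ‖z m‖) atTop atTop)
    (lam : ℂ) (hlam : Tendsto (fun m => f (z m)) atTop (nhds lam)) :
    ∀ K : Set ℂ, IsCompact K →
      TendstoUniformlyOn (fun m w => f (w + z m)) (fun _ => lam) atTop K := by
  obtain ⟨C, hC⟩ := hbd
  -- key claim by induction on n
  have key : ∀ n : ℕ, ∀ ε > (0:ℝ), ∀ᶠ m in atTop,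
      ∀ w ∈ closedBall (0:ℂ) n, dist (f (w + z m)) lam < ε := by
    intro n
    induction n with
    | zero =>
      intro ε hε
      filter_upwards [(Metric.tendsto_nhds.mp hlam ε hε)] with m hm w hw
      have : w = 0 := by simpa using hw
      simpa [this] using hm
    | succ n IH =>
      intro ε hε
      -- find R such that osc f ζ < ε/2 for ‖ζ‖ ≥ R
      have h1 : ∀ᶠ ζ in cocompact ℂ, osc f ζ < ε / 2 := by
        filter_upwards [Metric.tendsto_nhds.mp hvo (ε/2) (half_pos hε)] with ζ hζ
        calc osc f ζ ≤ |osc f ζ - 0| := by rw [sub_zero]; exact le_abs_self _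
          _ < ε / 2 := by simpa [Real.dist_eq] using hζ
      obtain ⟨t, ht, hts⟩ := mem_cocompact.mp h1
      obtain ⟨R, hR⟩ := ht.isBounded.subset_closedBall 0
      have hRbound : ∀ ζ : ℂ, R < ‖ζ‖ → osc f ζ < ε / 2 := by
        intro ζ hζ
        apply hts
        simp only [Set.mem_compl_iff]
        intro hmem
        have := hR hmem
        simp only [mem_closedBall, dist_zero_right] at this
        linarith
      filter_upwards [IH (ε/2) (half_pos hε), hz.eventually_ge_atTop (R + n + 2)]
        with m hm hzm w hw
      simp only [mem_closedBall, dist_zero_right] at hw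
      push_cast at hw
      -- pick w' with ‖w'‖ ≤ n and ‖w - w'‖ ≤ 1
      set w' : ℂ := if ‖w‖ ≤ n then w else ((n : ℝ) / ‖w‖ : ℝ) • w with hw'def
      have hw'n : ‖w'‖ ≤ n := by
        by_cases h : ‖w‖ ≤ n
        · simp only [hw'def, if_pos h]; exact h
        · push_neg at h
          have hwpos : (0:ℝ) < ‖w‖ := lt_of_le_of_lt (Nat.cast_nonneg n) h
          simp only [hw'def, if_neg (not_le.mpr h), norm_smul, Real.norm_eq_abs]
          rw [abs_of_nonneg (div_nonneg (Nat.cast_nonneg n) hwpos.le)]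
          rw [div_mul_cancel₀ _ hwpos.ne']
      have hww' : ‖w - w'‖ ≤ 1 := by
        by_cases h : ‖w‖ ≤ n
        · simp only [hw'def, if_pos h, sub_self, norm_zero]; norm_num
        · push_neg at h
          have hwpos : (0:ℝ) < ‖w‖ := lt_of_le_of_lt (Nat.cast_nonneg n) h
          have : w - w' = ((1 : ℝ) - (n : ℝ)/‖w‖) • w := by
            simp only [hw'def, if_neg (not_le.mpr h)]
            rw [sub_smul, one_smul]
          rw [this, norm_smul, Real.norm_eq_abs,
            abs_of_nonneg (by rw [sub_nonneg]; exact (div_le_one hwpos).mpr h.le),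
            sub_mul, one_mul, div_mul_cancel₀ _ hwpos.ne']
          linarith
      have hosc : osc f (w' + z m) < ε / 2 := by
        apply hRbound
        have : ‖w' + z m‖ ≥ ‖z m‖ - ‖w'‖ := by
          calc ‖z m‖ - ‖w'‖ ≤ ‖z m‖ - ‖-w'‖ := by rw [norm_neg]
            _ ≤ ‖z m - -w'‖ := norm_sub_norm_le _ _
            _ = ‖w' + z m‖ := by ring_nf
        have := this
        linarith
      have hchain : dist (f (w + z m)) (f (w' + z m)) ≤ osc f (w' + z m) := by
        rw [dist_eq_norm, ← norm_neg, neg_sub]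
        exact osc_le_bound f C hC (by
          simp only [mem_closedBall, dist_eq_norm]
          calc ‖w + z m - (w' + z m)‖ = ‖w - w'‖ := by ring_nf
            _ ≤ 1 := hww')
      have hIHw' : dist (f (w' + z m)) lam < ε / 2 := hm w' (by
        simp only [mem_closedBall, dist_zero_right]; exact hw'n)
      calc dist (f (w + z m)) lam
          ≤ dist (f (w + z m)) (f (w' + z m)) + dist (f (w' + z m)) lam := dist_triangle _ _ _
        _ < ε / 2 + ε / 2 := by
            have := lt_of_le_of_lt hchain hosc
            linarith
        _ = ε := add_halves ε
  intro K hK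
  obtain ⟨r, hr⟩ := hK.isBounded.subset_closedBall 0
  rw [Metric.tendstoUniformlyOn_iff]
  intro ε hε
  filter_upwards [key ⌈r⌉₊ ε hε] with m hm w hwK
  have : w ∈ closedBall (0:ℂ) (⌈r⌉₊ : ℝ) :=
    closedBall_subset_closedBall (Nat.le_ceil r) (hr hwK)
  rw [dist_comm]
  exact hm w this
end

section
/- If an entire function g: ℂ → ℂ satisfies that w ↦ w̄^{k−1} g(w) is a polynomial in w and w̄ of total degree at most k−1 (equivalently, a polyanalytic polynomial of degree ≤ k−1), then g is constant. -/
open Complex Bornology Set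

/-! Off the unit disc, `|w̄^{k-1} g(w)| = |w|^{k-1} |g(w)|` is dominated by a polynomial of degree
`≤ k-1` in `|w|`, so `g` is bounded there; being continuous it is bounded on the disc too, and
Liouville's theorem applies. -/

section PolynomialBound

variable {R : Type*} [SeminormedRing R] [NormOneClass R]

theorem norm_mul_pow_mul_pow_le_of_add_le {a x y : R} {i j n : ℕ} {r : ℝ} (hij : i + j ≤ n)
    (hr : 1 ≤ r) (hx : ‖x‖ ≤ r) (hy : ‖y‖ ≤ r) :
    ‖a * x ^ i * y ^ j‖ ≤ ‖a‖ * r ^ n :=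
  calc ‖a * x ^ i * y ^ j‖ ≤ ‖a‖ * ‖x‖ ^ i * ‖y‖ ^ j := by
        refine (norm_mul_le _ _).trans ?_
        gcongr
        · exact (norm_mul_le _ _).trans (by gcongr; exact norm_pow_le _ _)
        · exact norm_pow_le _ _
    _ ≤ ‖a‖ * r ^ i * r ^ j := by gcongr
    _ = ‖a‖ * r ^ (i + j) := by rw [pow_add, mul_assoc]
    _ ≤ ‖a‖ * r ^ n := by gcongr

theorem norm_sum_mul_pow_mul_pow_le (s t : Finset ℕ) {c : ℕ → ℕ → R} {n : ℕ}
    (hc : ∀ i j, n < i + j → c i j = 0) {x y : R} {r : ℝ} (hr : 1 ≤ r) (hx : ‖x‖ ≤ r)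
    (hy : ‖y‖ ≤ r) :
    ‖∑ i ∈ s, ∑ j ∈ t, c i j * x ^ i * y ^ j‖ ≤ (∑ i ∈ s, ∑ j ∈ t, ‖c i j‖) * r ^ n := by
  rw [Finset.sum_mul]
  refine (norm_sum_le _ _).trans <| Finset.sum_le_sum fun i _ => ?_
  rw [Finset.sum_mul]
  refine (norm_sum_le _ _).trans <| Finset.sum_le_sum fun j _ => ?_
  by_cases hij : i + j ≤ n
  · exact norm_mul_pow_mul_pow_le_of_add_le hij hr hx hy
  · simp [hc i j (not_le.mp hij)]

end PolynomialBound

theorem isBounded_range_of_norm_le_of_le_norm {E F : Type*} [NormedAddCommGroup E]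
    [ProperSpace E] [SeminormedAddCommGroup F] {f : E → F} (hf : Continuous f) {r C : ℝ}
    (h : ∀ x, r ≤ ‖x‖ → ‖f x‖ ≤ C) : IsBounded (range f) := by
  refine (((isCompact_closedBall (0 : E) r).image hf).isBounded.union
    (Metric.isBounded_closedBall (x := (0 : F)) (r := C))).subset ?_
  rintro _ ⟨x, rfl⟩
  rcases le_or_gt r ‖x‖ with hx | hx
  · exact Or.inr (mem_closedBall_zero_iff.mpr (h x hx))
  · exact Or.inl ⟨x, mem_closedBall_zero_iff.mpr hx.le, rfl⟩

theorem entire_times_conj_pow_polynomial_constant_general (k : ℕ)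
    (g : ℂ → ℂ) (hg : Differentiable ℂ g)
    (c : ℕ → ℕ → ℂ) (hc : ∀ i j, k - 1 < i + j → c i j = 0)
    (hrep : ∀ w : ℂ, (starRingEnd ℂ w) ^ (k - 1) * g w
      = ∑ i ∈ Finset.range k, ∑ j ∈ Finset.range k,
          c i j * w ^ i * (starRingEnd ℂ w) ^ j) :
    ∃ a : ℂ, ∀ w, g w = a := by
  refine hg.exists_const_forall_eq_of_bounded <|
    isBounded_range_of_norm_le_of_le_norm hg.continuous (r := 1)
      (C := ∑ i ∈ Finset.range k, ∑ j ∈ Finset.range k, ‖c i j‖) fun w hw => ?_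
  refine le_of_mul_le_mul_right ?_ (by positivity : 0 < ‖w‖ ^ (k - 1))
  calc ‖g w‖ * ‖w‖ ^ (k - 1) = ‖(starRingEnd ℂ w) ^ (k - 1) * g w‖ := by
        rw [norm_mul, norm_pow, RCLike.norm_conj, mul_comm]
    _ ≤ _ := hrep w ▸ norm_sum_mul_pow_mul_pow_le _ _ hc hw le_rfl (RCLike.norm_conj w).le

/-- If g is entire and w̄^{k−1} g(w) is a polyanalytic polynomial of total degree ≤ k−1,
then g is constant. -/
theorem entire_times_conj_pow_polynomial_constant (k : ℕ) (hk : 1 ≤ k)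
    (g : ℂ → ℂ) (hg : Differentiable ℂ g)
    (c : ℕ → ℕ → ℂ) (hc : ∀ i j, k - 1 < i + j → c i j = 0)
    (hrep : ∀ w : ℂ, (starRingEnd ℂ w) ^ (k - 1) * g w
      = ∑ i ∈ Finset.range k, ∑ j ∈ Finset.range k,
          c i j * w ^ i * (starRingEnd ℂ w) ^ j) :
    ∃ a : ℂ, ∀ w, g w = a :=
  entire_times_conj_pow_polynomial_constant_general k g hg c hc hrep
end
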